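/- arXiv:2509.07479 — 6 statements merged into one kernel-verified Lean document; each statement's English description precedes it below -/
import Mathlib

section
/- Let H₀ be an infinite-dimensional Hilbert space. There is no topology on H₀ whose convergent nets are exactly the nets (ζ_α) that converge 'meta weakly' to some ζ∞, where (ζ_α) converges meta weakly to ζ∞ means: for every net (η_α) converging to η∞ in norm, ⟨ζ_α, η_α⟩ → ⟨ζ∞, η∞⟩. -/
/-- Meta weak convergence of a net `(ζ_α)` to `z`: for every net `(η_α)` over the same index
set converging in norm to some `w`, one has `⟨ζ_α, η_α⟩ → ⟨z, w⟩`. -/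
def MetaWeakConv {H : Type*} [NormedAddCommGroup H] [InnerProductSpace ℂ H]
    {A : Type*} [Preorder A] (ζ : A → H) (z : H) : Prop :=
  ∀ (η : A → H) (w : H), Filter.Tendsto η Filter.atTop (nhds w) →
    Filter.Tendsto (fun α => (inner ℂ (ζ α) (η α) : ℂ)) Filter.atTop (nhds (inner ℂ z w))

/-!
A topology satisfies the iterated-limit principle: if `x n m → y n` as `m → ∞` and `y n → z`,
then the diagonal net `(n, φ) ↦ x n (φ n)`, indexed by `ℕ × (ℕ → ℕ)`, converges to `z`.
Meta weak convergence violates it. For an orthonormal sequence `e`, Bessel's inequality makes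
`e (g m)` converge meta weakly to `0` whenever `g m → ∞`, so `e n + (n + 1) • e (n + m + 1)`
converges meta weakly to `e n` as `m → ∞`, and `e n` to `0`. Yet pairing the diagonal net with the
norm-null net `(n + 1)⁻¹ • e (n + φ n + 1)` gives the constant inner product `1`.
-/

open Filter Topology

theorem exists_orthonormal_nat_of_not_finiteDimensional {𝕜 E : Type*} [RCLike 𝕜]
    [NormedAddCommGroup E] [InnerProductSpace 𝕜 E] (h : ¬ FiniteDimensional 𝕜 E) :
    ∃ e : ℕ → E, Orthonormal 𝕜 e := by
  let b := Module.Basis.ofVectorSpace 𝕜 E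
  have : Infinite (Module.Basis.ofVectorSpaceIndex 𝕜 E) :=
    not_finite_iff_infinite.mp fun _ => h (Module.Finite.of_basis b)
  exact ⟨_, InnerProductSpace.gramSchmidtNormed_orthonormal
    (b.linearIndependent.comp _ (Infinite.natEmbedding _).injective)⟩

theorem tendsto_diagonal_of_tendsto_iterated {X ι κ : Type*} [TopologicalSpace X]
    [Preorder ι] [Nonempty ι] [IsDirected ι (· ≤ ·)]
    [Preorder κ] [Nonempty κ] [IsDirected κ (· ≤ ·)]
    {x : ι → κ → X} {y : ι → X} {z : X}
    (hx : ∀ i, Tendsto (x i) atTop (𝓝 (y i))) (hy : Tendsto y atTop (𝓝 z)) :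
    Tendsto (fun p : ι × (ι → κ) => x p.1 (p.2 p.1)) atTop (𝓝 z) := by
  rw [(nhds_basis_opens z).tendsto_right_iff]
  rintro u ⟨hzu, hu⟩
  obtain ⟨N, hN⟩ := eventually_atTop.mp (hy (hu.mem_nhds hzu))
  have hrow (i : ι) : ∃ M, ∀ m ≥ M, y i ∈ u → x i m ∈ u :=
    eventually_atTop.mp <| eventually_imp_distrib_left.mpr fun h => hx i (hu.mem_nhds h)
  choose M hM using hrow
  filter_upwards [mem_atTop (N, M)] with ⟨i, φ⟩ ⟨hi, hφ⟩
  exact hM i (φ i) (hφ i) (hN i hi)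

theorem Orthonormal.tendsto_inner_zero {𝕜 E ι α : Type*} [RCLike 𝕜]
    [NormedAddCommGroup E] [InnerProductSpace 𝕜 E] {e : ι → E} (he : Orthonormal 𝕜 e)
    {l : Filter α} {g : α → ι} (hg : Tendsto g l cofinite) {η : α → E} {v : E}
    (hη : Tendsto η l (𝓝 v)) :
    Tendsto (fun a => inner 𝕜 (e (g a)) (η a)) l (𝓝 0) := by
  have hv : Tendsto (fun i => inner 𝕜 (e i) v) cofinite (𝓝 0) := by
    rw [tendsto_zero_iff_norm_tendsto_zero]
    simpa using (he.inner_products_summable v).tendsto_cofinite_zero.sqrt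
  have hdiff : Tendsto (fun a => inner 𝕜 (e (g a)) (η a - v)) l (𝓝 0) := by
    refine squeeze_zero_norm (fun a => ?_) (tendsto_iff_norm_sub_tendsto_zero.mp hη)
    simpa [he.1 (g a)] using norm_inner_le_norm (𝕜 := 𝕜) (e (g a)) (η a - v)
  simpa [inner_sub_right] using hdiff.add (hv.comp hg)

namespace MetaWeakConv

variable {H A : Type*} [NormedAddCommGroup H] [InnerProductSpace ℂ H] [Preorder A]
  {ζ : A → H} {z : H}

theorem const_add (h : MetaWeakConv ζ z) (y : H) :
    MetaWeakConv (fun α => y + ζ α) (y + z) := fun η w hη => by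
  simpa only [inner_add_left] using (tendsto_const_nhds.inner hη).add (h η w hη)

theorem const_smul (h : MetaWeakConv ζ z) (c : ℂ) :
    MetaWeakConv (fun α => c • ζ α) (c • z) := fun η w hη => by
  simpa only [inner_smul_left] using (h η w hη).const_mul _

end MetaWeakConv

theorem Orthonormal.metaWeakConv_zero {H ι A : Type*} [NormedAddCommGroup H]
    [InnerProductSpace ℂ H] [Preorder A] {e : ι → H} (he : Orthonormal ℂ e) {g : A → ι}
    (hg : Tendsto g atTop cofinite) : MetaWeakConv (fun α => e (g α)) 0 := fun _ _ hη => by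
  simpa only [inner_zero_left] using he.tendsto_inner_zero hg hη

section Spike

variable {H : Type*} [NormedAddCommGroup H] [InnerProductSpace ℂ H] {e : ℕ → H}

theorem metaWeakConv_spike (he : Orthonormal ℂ e) (n : ℕ) :
    MetaWeakConv (fun m => e n + ((n : ℂ) + 1) • e (n + m + 1)) (e n) := by
  have hg : Tendsto (fun m => n + m + 1) atTop cofinite :=
    Nat.cofinite_eq_atTop ▸ tendsto_atTop_mono (fun m => show m ≤ n + m + 1 by omega) tendsto_id
  simpa using ((he.metaWeakConv_zero hg).const_smul ((n : ℂ) + 1)).const_add (e n)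

theorem not_metaWeakConv_spike_diagonal (he : Orthonormal ℂ e) :
    ¬ MetaWeakConv (fun p : ℕ × (ℕ → ℕ) =>
      e p.1 + ((p.1 : ℂ) + 1) • e (p.1 + p.2 p.1 + 1)) 0 := by
  intro h
  set η : ℕ × (ℕ → ℕ) → H := fun p => ((p.1 : ℂ) + 1)⁻¹ • e (p.1 + p.2 p.1 + 1)
  have hη : Tendsto η atTop (𝓝 0) := by
    rw [tendsto_zero_iff_norm_tendsto_zero]
    have hfst : Tendsto (fun p : ℕ × (ℕ → ℕ) => (p.1 : ℝ) + 1) atTop atTop :=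
      tendsto_atTop_add_const_right _ 1 <| tendsto_natCast_atTop_atTop.comp <|
        monotone_fst.tendsto_atTop_atTop fun n => ⟨(n, 0), le_rfl⟩
    refine (tendsto_inv_atTop_zero.comp hfst).congr fun p => ?_
    simpa [η, norm_smul, he.1] using (Complex.norm_natCast (p.1 + 1)).symm
  have hinner (p : ℕ × (ℕ → ℕ)) :
      inner ℂ (e p.1 + ((p.1 : ℂ) + 1) • e (p.1 + p.2 p.1 + 1)) (η p) = 1 := by
    have hne : p.1 ≠ p.1 + p.2 p.1 + 1 := by omega
    simp [η, orthonormal_iff_ite.mp he, hne, he.1,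
      inv_mul_cancel₀ (Nat.cast_add_one_ne_zero (R := ℂ) p.1)]
  have := h η 0 hη
  simp only [hinner, inner_zero_left] at this
  exact one_ne_zero (tendsto_nhds_unique tendsto_const_nhds this)

end Spike

theorem stmt_1_general {H : Type*} [NormedAddCommGroup H] [InnerProductSpace ℂ H]
    (hinf : ¬ FiniteDimensional ℂ H) :
    ¬ ∃ t : TopologicalSpace H,
        ∀ (A : Type) [Preorder A] [IsDirected A (· ≤ ·)] [Nonempty A]
          (ζ : A → H) (z : H),
          Filter.Tendsto ζ Filter.atTop (@nhds H t z) ↔ MetaWeakConv ζ z := by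
  rintro ⟨t, ht⟩
  obtain ⟨e, he⟩ := exists_orthonormal_nat_of_not_finiteDimensional hinf
  have hrow (n : ℕ) := (ht ℕ _ _).mpr (metaWeakConv_spike he n)
  have hcol := (ht ℕ e 0).mpr (he.metaWeakConv_zero (Nat.cofinite_eq_atTop ▸ tendsto_id))
  exact not_metaWeakConv_spike_diagonal he
    ((ht _ _ _).mp (tendsto_diagonal_of_tendsto_iterated hrow hcol))

/-- On an infinite-dimensional Hilbert space there is no topology whose convergent nets are
precisely the meta weakly convergent nets. -/
theorem stmt_1 {H : Type*} [NormedAddCommGroup H] [InnerProductSpace ℂ H] [CompleteSpace H]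
    (hinf : ¬ FiniteDimensional ℂ H) :
    ¬ ∃ t : TopologicalSpace H,
        ∀ (A : Type) [Preorder A] [IsDirected A (· ≤ ·)] [Nonempty A]
          (ζ : A → H) (z : H),
          Filter.Tendsto ζ Filter.atTop (@nhds H t z) ↔ MetaWeakConv ζ z :=
  stmt_1_general hinf
end

section
/- Let (T_α) be a net of bounded self-adjoint operators on a Hilbert space H₀ with sup_{α≥α₀}‖T_α‖ < ∞, converging to the bounded self-adjoint operator T∞ in the strong operator topology. Then the spectrum of T∞ is contained in the limit set of the spectra: for every λ ∈ σ(T∞) there exists a net (λ_α) of reals with λ_α ∈ σ(T_α) for all α and λ_α → λ. -/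
/-!
A point `z` of the spectrum of the normal limit `Slim` is an approximate eigenvalue: otherwise
`Slim - z` is bounded below, hence injective with dense range, hence invertible. Strong
convergence makes an approximate eigenvector of `Slim` one of `S i` for all large `i`, and for a
normal `S` the functional calculus gives `dist(z, σ(S)) ‖ξ‖ ≤ ‖(S - z) ξ‖`. So
`dist(z, σ(S i)) → 0`, and nearest spectral points converge to `z`; for self-adjoint operators
they are real.
-/

open Filter Metric Topology

theorem IsStarNormal.algebraMap_sub {R A : Type*} [CommSemiring R] [StarRing R] [Ring A]
    [StarRing A] [Algebra R A] [StarModule R A] (r : R) (a : A) [ha : IsStarNormal a] :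
    IsStarNormal (algebraMap R A r - a) := by
  refine ⟨?_⟩
  rw [star_sub, ← algebraMap_star_comm]
  exact (Algebra.commute_algebraMap_left (star r) _).sub_left
    ((Algebra.commute_algebraMap_right r (star a)).sub_right ha.star_comm_self)

namespace ContinuousLinearMap

variable {H : Type*} [NormedAddCommGroup H] [InnerProductSpace ℂ H] [CompleteSpace H]

/-- A normal operator has dense range as soon as it is injective, since `(range S)ᗮ = ker S`. -/
theorem isUnit_of_isStarNormal_of_antilipschitz {S : H →L[ℂ] H} [hS : IsStarNormal S]
    {K : NNReal} (hK : AntilipschitzWith K S) : IsUnit S := by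
  rw [isUnit_iff_bijective, bijective_iff_dense_range_and_antilipschitz]
  refine ⟨?_, K, hK⟩
  rw [Submodule.topologicalClosure_eq_top_iff, IsStarNormal.orthogonal_range hS]
  exact LinearMap.ker_eq_bot_of_injective hK.injective

theorem exists_norm_apply_lt_mul_norm_of_not_isUnit {S : H →L[ℂ] H} [IsStarNormal S]
    (hS : ¬IsUnit S) {ε : ℝ} (hε : 0 < ε) : ∃ ξ : H, ‖S ξ‖ < ε * ‖ξ‖ := by
  by_contra! hbdd
  refine hS (isUnit_of_isStarNormal_of_antilipschitz
    (S.antilipschitz_of_bound (K := ε.toNNReal⁻¹) fun x => ?_))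
  rw [NNReal.coe_inv, Real.coe_toNNReal _ hε.le, inv_mul_eq_div, le_div_iff₀ hε, mul_comm]
  exact hbdd x

theorem exists_norm_sub_smul_lt_mul_norm_of_mem_spectrum {S : H →L[ℂ] H} [IsStarNormal S]
    {z : ℂ} (hz : z ∈ spectrum ℂ S) {ε : ℝ} (hε : 0 < ε) :
    ∃ ξ : H, ‖S ξ - z • ξ‖ < ε * ‖ξ‖ := by
  have := IsStarNormal.algebraMap_sub z S
  obtain ⟨ξ, hξ⟩ := exists_norm_apply_lt_mul_norm_of_not_isUnit (spectrum.mem_iff.mp hz) hε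
  refine ⟨ξ, ?_⟩
  rw [← norm_neg]
  simpa [Algebra.algebraMap_eq_smul_one] using hξ

/-- For `z` off the spectrum, `w ↦ (w - z)⁻¹` is bounded by `(infDist z σ(S))⁻¹` on `σ(S)`, so
its continuous functional calculus is a left inverse of `S - z` of at most that norm. -/
theorem infDist_spectrum_mul_norm_le (S : H →L[ℂ] H) [IsStarNormal S] (z : ℂ) (ξ : H) :
    infDist z (spectrum ℂ S) * ‖ξ‖ ≤ ‖S ξ - z • ξ‖ := by
  set d := infDist z (spectrum ℂ S)
  rcases le_or_gt d 0 with hd | hd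
  · exact (mul_nonpos_of_nonpos_of_nonneg hd (norm_nonneg ξ)).trans (norm_nonneg _)
  have hle : ∀ w ∈ spectrum ℂ S, d ≤ ‖w - z‖ := fun w hw => by
    simpa [dist_eq_norm, norm_sub_rev] using infDist_le_dist_of_mem (x := z) hw
  have hne : ∀ w ∈ spectrum ℂ S, w - z ≠ 0 := fun w hw h0 => by
    have := hle w hw
    rw [h0, norm_zero] at this
    exact this.not_gt hd
  set R := cfc (fun w : ℂ => (w - z)⁻¹) S
  have hsub : S - algebraMap ℂ _ z = cfc (fun w : ℂ => w - z) S := by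
    rw [cfc_sub _ _ S, cfc_id' ℂ S, cfc_const z S]
  have hR : R * (S - algebraMap ℂ _ z) = 1 := by
    have hcont : ContinuousOn (fun w : ℂ => (w - z)⁻¹) (spectrum ℂ S) :=
      (continuousOn_id.sub continuousOn_const).inv₀ hne
    rw [hsub, ← cfc_mul _ _ S hcont, ← cfc_one ℂ S]
    exact cfc_congr fun w hw => inv_mul_cancel₀ (hne w hw)
  have hRnorm : ‖R‖ ≤ d⁻¹ :=
    norm_cfc_le (by positivity) fun w hw => by
      rw [norm_inv]
      exact inv_anti₀ hd (hle w hw)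
  have hSξ : (S - algebraMap ℂ _ z) ξ = S ξ - z • ξ := by
    simp [Algebra.algebraMap_eq_smul_one]
  have hRξ : R (S ξ - z • ξ) = ξ := by
    rw [← hSξ, ← mul_apply_eq_comp, hR, one_apply_eq_self]
  calc d * ‖ξ‖ = d * ‖R (S ξ - z • ξ)‖ := by rw [hRξ]
    _ ≤ d * (d⁻¹ * ‖S ξ - z • ξ‖) := by
        gcongr
        exact (R.le_opNorm _).trans (by gcongr)
    _ = ‖S ξ - z • ξ‖ := by field_simp

end ContinuousLinearMap

section StrongConvergence

variable {H : Type*} [NormedAddCommGroup H] [InnerProductSpace ℂ H] [CompleteSpace H]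
  {ι : Type*} {L : Filter ι} {S : ι → H →L[ℂ] H} {Slim : H →L[ℂ] H}

theorem tendsto_infDist_spectrum_of_tendsto_apply (hS : ∀ i, IsStarNormal (S i))
    [IsStarNormal Slim] (hconv : ∀ ξ, Tendsto (fun i => S i ξ) L (𝓝 (Slim ξ)))
    {z : ℂ} (hz : z ∈ spectrum ℂ Slim) :
    Tendsto (fun i => infDist z (spectrum ℂ (S i))) L (𝓝 0) := by
  rw [Metric.tendsto_nhds]
  intro ε hε
  obtain ⟨ξ, hξ⟩ :=
    ContinuousLinearMap.exists_norm_sub_smul_lt_mul_norm_of_mem_spectrum hz (half_pos hε)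
  have hξpos : 0 < ‖ξ‖ := pos_of_mul_pos_right ((norm_nonneg _).trans_lt hξ) (half_pos hε).le
  filter_upwards [(hconv ξ).eventually (ball_mem_nhds _ (mul_pos (half_pos hε) hξpos))]
    with i hi
  rw [dist_eq_norm] at hi
  rw [Real.dist_0_eq_abs, abs_of_nonneg infDist_nonneg]
  refine lt_of_mul_lt_mul_right ?_ hξpos.le
  calc infDist z (spectrum ℂ (S i)) * ‖ξ‖ ≤ ‖S i ξ - z • ξ‖ :=
        (S i).infDist_spectrum_mul_norm_le z ξ
    _ ≤ ‖S i ξ - Slim ξ‖ + ‖Slim ξ - z • ξ‖ := norm_sub_le_norm_sub_add_norm_sub _ _ _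
    _ < ε / 2 * ‖ξ‖ + ε / 2 * ‖ξ‖ := add_lt_add hi hξ
    _ = ε * ‖ξ‖ := by ring

theorem exists_tendsto_mem_spectrum_of_tendsto_apply (hS : ∀ i, IsStarNormal (S i))
    [IsStarNormal Slim] (hconv : ∀ ξ, Tendsto (fun i => S i ξ) L (𝓝 (Slim ξ)))
    {z : ℂ} (hz : z ∈ spectrum ℂ Slim) :
    ∃ w : ι → ℂ, (∀ i, w i ∈ spectrum ℂ (S i)) ∧ Tendsto w L (𝓝 z) := by
  have : Nontrivial (H →L[ℂ] H) := by
    by_contra! h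
    simp [spectrum.of_subsingleton] at hz
  choose w hw hwdist using fun i =>
    (spectrum.isCompact (S i)).exists_infDist_eq_dist (spectrum.nonempty (S i)) z
  refine ⟨w, hw, tendsto_iff_dist_tendsto_zero.mpr ?_⟩
  simpa only [dist_comm, ← hwdist] using tendsto_infDist_spectrum_of_tendsto_apply hS hconv hz

end StrongConvergence

theorem stmt_7_general {H : Type*} [NormedAddCommGroup H] [InnerProductSpace ℂ H] [CompleteSpace H]
    {A : Type*} [Preorder A]
    (T : A → H →L[ℂ] H) (Tlim : H →L[ℂ] H)
    (hsa : ∀ α, IsSelfAdjoint (T α)) (hsalim : IsSelfAdjoint Tlim)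
    (hconv : ∀ ξ : H, Tendsto (fun α => T α ξ) atTop (nhds (Tlim ξ))) :
    ∀ μ : ℝ, (μ : ℂ) ∈ spectrum ℂ Tlim →
      ∃ l : A → ℝ, (∀ α, ((l α : ℂ) ∈ spectrum ℂ (T α))) ∧ Tendsto l atTop (nhds μ) := by
  intro μ hμ
  have := hsalim.isStarNormal
  obtain ⟨w, hw, hwμ⟩ :=
    exists_tendsto_mem_spectrum_of_tendsto_apply (fun α => (hsa α).isStarNormal) hconv hμ
  refine ⟨fun α => (w α).re, fun α => (hsa α).mem_spectrum_eq_re (hw α) ▸ hw α, ?_⟩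
  simpa [Function.comp_def] using (Complex.continuous_re.tendsto _).comp hwμ

/-- Spectral inclusion under strong operator convergence of a uniformly bounded net of
bounded self-adjoint operators: every point of the spectrum of the limit is the limit of a
net of spectral points of the approximants. -/
theorem stmt_7 {H : Type*} [NormedAddCommGroup H] [InnerProductSpace ℂ H] [CompleteSpace H]
    {A : Type*} [Preorder A] [IsDirected A (· ≤ ·)] [Nonempty A]
    (T : A → H →L[ℂ] H) (Tlim : H →L[ℂ] H)
    (hsa : ∀ α, IsSelfAdjoint (T α)) (hsalim : IsSelfAdjoint Tlim)
    (α₀ : A) (C : ℝ) (hb : ∀ α, α₀ ≤ α → ‖T α‖ ≤ C)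
    (hconv : ∀ ξ : H, Tendsto (fun α => T α ξ) atTop (nhds (Tlim ξ))) :
    ∀ μ : ℝ, (μ : ℂ) ∈ spectrum ℂ Tlim →
      ∃ l : A → ℝ, (∀ α, ((l α : ℂ) ∈ spectrum ℂ (T α))) ∧ Tendsto l atTop (nhds μ) :=
  stmt_7_general T Tlim hsa hsalim hconv
end

section
/- Let (T_α)_{α∈A} and T∞ be self-adjoint operators (possibly unbounded) on a fixed Hilbert space H₀. If for some λ ∈ ⋂_α ρ(T_α) ∩ ρ(T∞) one has (λ − T_α)⁻¹ → (λ − T∞)⁻¹ in the strong operator topology, then for every φ ∈ C₀(ℝ; ℂ) (continuous functions vanishing at infinity) one has φ(T_α) → φ(T∞) in the strong operator topology. -/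
/-!
The first resolvent identity transfers strong convergence from the resolvents at `λ` to the
uniformly bounded resolvents at `i`, and, since the adjoint of the resolvent at `i` of a
self-adjoint operator is its resolvent at `-i`, also to their adjoints.

The map `x ↦ (i - x)⁻¹` identifies `ℝ` with the circle `|z + i/2| = 1/2` punctured at `0`, so
pulling back along it identifies `C(circle, ℂ)₀` with `C₀(ℝ, ℂ)` and sends `z ↦ z` to the resolvent
function. By Stone–Weierstrass, `z` and `z̄` generate `C(circle, ℂ)₀` as a closed non-unital
algebra, and the functions on which the calculi converge strongly form such an algebra: it is
closed because star homomorphisms between C⋆-algebras are contractive.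
-/

open Filter ZeroAtInfty Topology Complex
open scoped ContinuousMapZero ComplexConjugate

section BoundedFamily

variable {𝕜 E F ι : Type*} [NontriviallyNormedField 𝕜] [NormedAddCommGroup E] [NormedSpace 𝕜 E]
  [NormedAddCommGroup F] [NormedSpace 𝕜 F] {l : Filter ι} {P : ι → E →L[𝕜] F} {C : ℝ}

theorem ContinuousLinearMap.tendsto_apply_zero_of_norm_le
    (hC : ∀ i, ‖P i‖ ≤ C) {u : ι → E} (hu : Tendsto u l (𝓝 0)) :
    Tendsto (fun i => P i (u i)) l (𝓝 0) := by
  refine squeeze_zero_norm (fun i => (P i).le_of_opNorm_le (hC i) (u i)) ?_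
  simpa using hu.norm.const_mul C

theorem ContinuousLinearMap.tendsto_apply_of_norm_le (hC : ∀ i, ‖P i‖ ≤ C) {Plim : E →L[𝕜] F}
    {u : ι → E} {v : E} (hu : Tendsto u l (𝓝 v)) (hP : Tendsto (fun i => P i v) l (𝓝 (Plim v))) :
    Tendsto (fun i => P i (u i)) l (𝓝 (Plim v)) := by
  have h := (tendsto_apply_zero_of_norm_le hC (tendsto_sub_nhds_zero_iff.mpr hu)).add hP
  simpa only [← map_add, sub_add_cancel, zero_add] using h

end BoundedFamily

namespace LinearPMap

section Resolvent

variable {𝕜 E : Type*} [NontriviallyNormedField 𝕜] [NormedAddCommGroup E] [NormedSpace 𝕜 E]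

def IsRightResolvent (T : E →ₗ.[𝕜] E) (μ : 𝕜) (R : E →L[𝕜] E) : Prop :=
  ∀ u, ∃ h : R u ∈ T.domain, μ • R u - T ⟨R u, h⟩ = u

def IsLeftResolvent (T : E →ₗ.[𝕜] E) (μ : 𝕜) (R : E →L[𝕜] E) : Prop :=
  ∀ v : T.domain, R (μ • (v : E) - T v) = v

variable {T : E →ₗ.[𝕜] E} {μ ν : 𝕜} {P S : E →L[𝕜] E}

theorem IsLeftResolvent.apply_eq_add_smul (hP : IsLeftResolvent T μ P) (hS : IsRightResolvent T ν S)
    (u : E) : P u = S u + (ν - μ) • P (S u) := by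
  obtain ⟨hSu, hu⟩ := hS u
  have h : P (μ • S u - T ⟨S u, hSu⟩) = S u := hP ⟨S u, hSu⟩
  rw [show μ • S u - T ⟨S u, hSu⟩ = (μ - ν) • S u + u by linear_combination (norm := module) hu,
    P.map_add, P.map_smul] at h
  linear_combination (norm := module) h

variable {ι : Type*} {l : Filter ι}

theorem tendsto_resolvent_of_tendsto_resolvent {T : ι → E →ₗ.[𝕜] E} {Tlim : E →ₗ.[𝕜] E}
    {S : ι → E →L[𝕜] E} {Slim : E →L[𝕜] E} (hS : ∀ i, IsRightResolvent (T i) ν (S i))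
    (hSlim : IsLeftResolvent Tlim ν Slim) (hconv : ∀ ξ, Tendsto (fun i => S i ξ) l (𝓝 (Slim ξ)))
    {P : ι → E →L[𝕜] E} {Plim : E →L[𝕜] E} {C : ℝ} (hP : ∀ i, IsLeftResolvent (T i) μ (P i))
    (hPlim : IsRightResolvent Tlim μ Plim) (hC : ∀ i, ‖P i‖ ≤ C) (ξ : E) :
    Tendsto (fun i => P i ξ) l (𝓝 (Plim ξ)) := by
  -- With `w = Plim ξ` and `ζ = (ν - Tlim) w` we have `Slim ζ = w` and `ξ = (μ - ν) w + ζ`.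
  obtain ⟨hw, hξ⟩ := hPlim ξ
  have hSlimζ : Slim (ν • Plim ξ - Tlim ⟨Plim ξ, hw⟩) = Plim ξ := hSlim ⟨Plim ξ, hw⟩
  have hSζ := hSlimζ ▸ hconv (ν • Plim ξ - Tlim ⟨Plim ξ, hw⟩)
  have hζ : ξ = (μ - ν) • Plim ξ + (ν • Plim ξ - Tlim ⟨Plim ξ, hw⟩) := by
    linear_combination (norm := module) -hξ
  generalize ν • Plim ξ - Tlim ⟨Plim ξ, hw⟩ = ζ at hSζ hζ
  generalize Plim ξ = w at hSζ hζ ⊢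
  have key : ∀ i, P i ξ = S i ζ + (ν - μ) • P i (S i ζ - w) := fun i => by
    rw [hζ, (P i).map_add, (P i).map_smul, (hP i).apply_eq_add_smul (hS i) ζ, (P i).map_sub]
    linear_combination (norm := module)
  have hrest := ContinuousLinearMap.tendsto_apply_zero_of_norm_le hC
    (tendsto_sub_nhds_zero_iff.mpr hSζ)
  simpa only [key, smul_zero, add_zero] using hSζ.add (hrest.const_smul (ν - μ))

end Resolvent

section Adjoint

variable {𝕜 E : Type*} [RCLike 𝕜] [NormedAddCommGroup E] [InnerProductSpace 𝕜 E] [CompleteSpace E]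
  {T : E →ₗ.[𝕜] E} {μ : 𝕜} {R : E →L[𝕜] E}

theorem _root_.IsSelfAdjoint.isFormalAdjoint (hT : IsSelfAdjoint T) : T.IsFormalAdjoint T := by
  simpa only [isSelfAdjoint_def.mp hT] using adjoint_isFormalAdjoint hT.dense_domain

theorem _root_.IsSelfAdjoint.exists_apply_eq_of_inner (hT : IsSelfAdjoint T) {y w : E}
    (h : ∀ x : T.domain, inner 𝕜 w (x : E) = inner 𝕜 y (T x)) :
    ∃ hy : y ∈ T.domain, T ⟨y, hy⟩ = w :=
  isSelfAdjoint_def.mp hT ▸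
    ⟨mem_adjoint_domain_of_exists y ⟨w, h⟩, adjoint_apply_eq hT.dense_domain _ h⟩

theorem IsLeftResolvent.adjoint_isRightResolvent (hT : IsSelfAdjoint T)
    (hR : IsLeftResolvent T μ R) : IsRightResolvent T (conj μ) (ContinuousLinearMap.adjoint R) := by
  intro u
  have hRT : ∀ x : T.domain, R (T x) = μ • R x - x := fun x => by
    have h := hR x
    rw [R.map_sub, R.map_smul] at h
    linear_combination (norm := module) -h
  obtain ⟨hy, hTy⟩ := hT.exists_apply_eq_of_inner
    (y := ContinuousLinearMap.adjoint R u)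
    (w := conj μ • ContinuousLinearMap.adjoint R u - u) fun x => by
      rw [ContinuousLinearMap.adjoint_inner_left, hRT, inner_sub_left, inner_smul_left,
        inner_sub_right, inner_smul_right, ContinuousLinearMap.adjoint_inner_left,
        RCLike.conj_conj]
  exact ⟨hy, by rw [hTy, sub_sub_cancel]⟩

theorem IsRightResolvent.adjoint_isLeftResolvent (hT : IsSelfAdjoint T)
    (hR : IsRightResolvent T μ R) : IsLeftResolvent T (conj μ) (ContinuousLinearMap.adjoint R) := by
  intro v
  refine ext_inner_right 𝕜 fun z => ?_
  obtain ⟨hz, hRz⟩ := hR z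
  rw [ContinuousLinearMap.adjoint_inner_left, inner_sub_left, inner_smul_left, RCLike.conj_conj,
    hT.isFormalAdjoint v ⟨R z, hz⟩]
  conv_rhs => rw [← hRz]
  rw [inner_sub_right, inner_smul_right]

end Adjoint

end LinearPMap

section StarHomFamily

variable {A H ι : Type*} [NonUnitalCStarAlgebra A] [NormedAddCommGroup H] [InnerProductSpace ℂ H]
  [CompleteSpace H] {l : Filter ι}

theorem NonUnitalStarAlgHom.lipschitzWith_apply (Ψ : A →⋆ₙₐ[ℂ] (H →L[ℂ] H)) (ξ : H) :
    LipschitzWith ‖ξ‖₊ (fun a => Ψ a ξ) :=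
  LipschitzWith.of_dist_le_mul fun a b => by
    rw [dist_eq_norm, dist_eq_norm, ← sub_apply, ← map_sub, mul_comm]
    exact (Ψ (a - b)).le_of_opNorm_le (NonUnitalStarAlgHom.norm_apply_le Ψ _) ξ

theorem NonUnitalStarAlgHom.isClosed_setOf_tendsto_apply (Ψ : ι → A →⋆ₙₐ[ℂ] (H →L[ℂ] H))
    (Ψlim : A →⋆ₙₐ[ℂ] (H →L[ℂ] H)) :
    IsClosed {a | ∀ ξ, Tendsto (fun i => Ψ i a ξ) l (𝓝 (Ψlim a ξ))} := by
  simp only [Set.ofPred_forall]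
  exact isClosed_iInter fun ξ =>
    (LipschitzWith.uniformEquicontinuous _ _ fun i => (Ψ i).lipschitzWith_apply ξ).equicontinuous
      |>.isClosed_setOfPred_tendsto (Ψlim.lipschitzWith_apply ξ).continuous

noncomputable instance {X : Type*} [TopologicalSpace X] [Zero X] [CompactSpace X] :
    NonUnitalCStarAlgebra C(X, ℂ)₀ where

theorem ContinuousMapZero.tendsto_apply_of_tendsto_id {s : Set ℂ} [Fact (0 ∈ s)] [CompactSpace s]
    {Ψ : ι → C(s, ℂ)₀ →⋆ₙₐ[ℂ] (H →L[ℂ] H)} {Ψlim : C(s, ℂ)₀ →⋆ₙₐ[ℂ] (H →L[ℂ] H)}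
    (hid : ∀ ξ, Tendsto (fun i => Ψ i (.id s) ξ) l (𝓝 (Ψlim (.id s) ξ)))
    (hstar : ∀ ξ, Tendsto (fun i => Ψ i (star (.id s)) ξ) l (𝓝 (Ψlim (star (.id s)) ξ)))
    (f : C(s, ℂ)₀) (ξ : H) : Tendsto (fun i => Ψ i f ξ) l (𝓝 (Ψlim f ξ)) := by
  induction f using ContinuousMapZero.induction_on_of_compact generalizing ξ with
  | zero => simpa using tendsto_const_nhds
  | id => exact hid ξ
  | star_id => exact hstar ξ
  | add f g hf hg => simpa only [map_add, add_apply] using (hf ξ).add (hg ξ)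
  | mul f g hf hg =>
    have := ContinuousLinearMap.tendsto_apply_of_norm_le
      (fun i => NonUnitalStarAlgHom.norm_apply_le (Ψ i) f) (hg ξ) (hf _)
    simp only [map_mul]
    exact this
  | smul c f hf => simpa only [map_smul, smul_apply] using (hf ξ).const_smul c
  | frequently f hf =>
    exact (NonUnitalStarAlgHom.isClosed_setOf_tendsto_apply Ψ Ψlim).mem_of_frequently_of_tendsto
      hf tendsto_id ξ

end StarHomFamily

section Pullback

variable {X Y : Type*} [TopologicalSpace X] [TopologicalSpace Y] [Zero Y]

noncomputable def ContinuousMapZero.compZeroAtInftyHom (ρ : C(X, Y))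
    (hρ : Tendsto ρ (cocompact X) (𝓝 0)) : C(Y, ℂ)₀ →⋆ₙₐ[ℂ] C₀(X, ℂ) where
  toFun g :=
    ⟨(g : C(Y, ℂ)).comp ρ, by simpa [map_zero g] using ((map_continuous g).tendsto 0).comp hρ⟩
  map_smul' _ _ := rfl
  map_zero' := rfl
  map_add' _ _ := rfl
  map_mul' _ _ := rfl
  map_star' _ := rfl

@[simp]
theorem ContinuousMapZero.compZeroAtInftyHom_apply (ρ : C(X, Y))
    (hρ : Tendsto ρ (cocompact X) (𝓝 0)) (g : C(Y, ℂ)₀) (x : X) :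
    compZeroAtInftyHom ρ hρ g x = g (ρ x) :=
  rfl

theorem ContinuousMapZero.compZeroAtInftyHom_surjective [T1Space Y] {ρ : C(X, Y)}
    (hρ : Tendsto ρ (cocompact X) (𝓝 0)) (c : Y → X) (hcρ : ∀ x, c (ρ x) = x) (hρ0 : ∀ x, ρ x ≠ 0)
    (hc : ∀ y ≠ 0, ContinuousAt c y) (hc0 : Tendsto c (𝓝[≠] 0) (cocompact X)) :
    Function.Surjective (compZeroAtInftyHom ρ hρ) := by
  classical
  intro φ
  have hF : Continuous (Function.update (φ ∘ c) 0 0) := continuous_iff_continuousAt.2 fun y => by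
    rcases eq_or_ne y 0 with rfl | hy
    · exact continuousAt_update_same.2 ((zero_at_infty φ).comp hc0)
    · exact (continuousAt_update_of_ne hy).2 ((map_continuous φ).continuousAt.comp (hc y hy))
  refine ⟨⟨⟨_, hF⟩, by simp⟩, ?_⟩
  ext x
  simp [Function.update_of_ne (hρ0 x), hcρ]

end Pullback

/-- The image of `ℝ` under `x ↦ (i - x)⁻¹`, together with `0`. -/
def resolventCircle : Set ℂ := Metric.sphere (-(I / 2)) 2⁻¹

theorem mem_resolventCircle_iff {z : ℂ} (hz : z ≠ 0) : z ∈ resolventCircle ↔ (z⁻¹).im = 1 := by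
  have hn : normSq z ≠ 0 := normSq_eq_zero.not.mpr hz
  rw [resolventCircle, mem_sphere_iff_norm, inv_im, div_eq_one_iff_eq hn,
    ← sq_eq_sq₀ (norm_nonneg _) (by norm_num), Complex.sq_norm]
  simp only [sub_neg_eq_add, normSq_apply, add_re, div_ofNat_re, I_re, zero_div, add_zero, add_im,
    div_ofNat_im, I_im, one_div, inv_pow]
  constructor <;> intro h <;> linarith

instance : Fact ((0 : ℂ) ∈ resolventCircle) := ⟨by simp [resolventCircle]⟩

instance : CompactSpace resolventCircle := isCompact_iff_compactSpace.mp (isCompact_sphere _ _)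

theorem I_sub_ofReal_ne_zero (x : ℝ) : I - x ≠ 0 := fun h => by simpa using congrArg im h

noncomputable def resolventCircleParam : C(ℝ, resolventCircle) where
  toFun x :=
    ⟨(I - x)⁻¹, (mem_resolventCircle_iff (inv_ne_zero (I_sub_ofReal_ne_zero x))).2 (by simp)⟩
  continuous_toFun :=
    ((continuous_const.sub continuous_ofReal).inv₀ I_sub_ofReal_ne_zero).subtype_mk _

theorem resolventCircleParam_ne_zero (x : ℝ) : resolventCircleParam x ≠ 0 :=
  Subtype.coe_ne_coe.mp (inv_ne_zero (I_sub_ofReal_ne_zero x))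

theorem tendsto_resolventCircleParam : Tendsto resolventCircleParam (cocompact ℝ) (𝓝 0) := by
  refine tendsto_subtype_rng.2 (tendsto_inv₀_cobounded.comp ?_)
  refine tendsto_norm_atTop_iff_cobounded.1
    (tendsto_atTop_mono (fun x => ?_) tendsto_norm_cocompact_atTop)
  simpa using abs_re_le_norm (I - x)

noncomputable def resolventCircleCoord (z : resolventCircle) : ℝ := -((z : ℂ)⁻¹).re

theorem resolventCircleCoord_param (x : ℝ) :
    resolventCircleCoord (resolventCircleParam x) = x := by
  simp [resolventCircleCoord, resolventCircleParam]

theorem I_sub_resolventCircleCoord {z : resolventCircle} (hz : z ≠ 0) :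
    I - resolventCircleCoord z = (z : ℂ)⁻¹ := by
  have him := (mem_resolventCircle_iff (Subtype.coe_ne_coe.mpr hz)).1 z.2
  apply Complex.ext <;> simp [resolventCircleCoord, him]

theorem continuousAt_resolventCircleCoord {z : resolventCircle} (hz : z ≠ 0) :
    ContinuousAt resolventCircleCoord z :=
  (continuous_re.continuousAt.comp (continuous_subtype_val.continuousAt.inv₀
    (Subtype.coe_ne_coe.mpr hz))).neg

theorem tendsto_resolventCircleCoord :
    Tendsto resolventCircleCoord (𝓝[≠] 0) (cocompact ℝ) := by
  have hval : Tendsto (fun z : resolventCircle => (z : ℂ)) (𝓝[≠] 0) (𝓝[≠] 0) :=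
    continuous_subtype_val.continuousWithinAt.tendsto_nhdsWithin fun _ => Subtype.coe_ne_coe.mpr
  have hinv := tendsto_norm_atTop_iff_cobounded.2 (tendsto_inv₀_nhdsNE_zero.comp hval)
  rw [← Metric.cobounded_eq_cocompact, ← tendsto_norm_atTop_iff_cobounded]
  refine tendsto_atTop_mono' _ ?_ (tendsto_atTop_add_const_right _ (-1) hinv)
  filter_upwards [self_mem_nhdsWithin] with z hz
  have h := norm_sub_le I (resolventCircleCoord z : ℂ)
  rw [I_sub_resolventCircleCoord hz, norm_inv, norm_I, norm_real, Real.norm_eq_abs] at h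
  simp only [Function.comp_apply, norm_inv, Real.norm_eq_abs]
  linarith

noncomputable def resolventPullback : C(resolventCircle, ℂ)₀ →⋆ₙₐ[ℂ] C₀(ℝ, ℂ) :=
  ContinuousMapZero.compZeroAtInftyHom resolventCircleParam tendsto_resolventCircleParam

theorem resolventPullback_surjective : Function.Surjective resolventPullback :=
  ContinuousMapZero.compZeroAtInftyHom_surjective _ resolventCircleCoord resolventCircleCoord_param
    resolventCircleParam_ne_zero (fun _ => continuousAt_resolventCircleCoord)
    tendsto_resolventCircleCoord

theorem stmt_9_general {H : Type*} [NormedAddCommGroup H] [InnerProductSpace ℂ H] [CompleteSpace H]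
    {A : Type*} [Preorder A]
    (T : A → H →ₗ.[ℂ] H) (Tlim : H →ₗ.[ℂ] H)
    (hsa : ∀ α, IsSelfAdjoint (T α)) (hsalim : IsSelfAdjoint Tlim)
    -- the resolvents at `i`
    (R : A → H →L[ℂ] H) (Rlim : H →L[ℂ] H)
    (hR : ∀ α (u : H), ∃ h : R α u ∈ (T α).domain,
      Complex.I • R α u - T α ⟨R α u, h⟩ = u)
    (hR' : ∀ α (v : (T α).domain), R α (Complex.I • (v : H) - T α v) = v)
    (hRlim : ∀ u : H, ∃ h : Rlim u ∈ Tlim.domain,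
      Complex.I • Rlim u - Tlim ⟨Rlim u, h⟩ = u)
    (hRlim' : ∀ v : Tlim.domain, Rlim (Complex.I • (v : H) - Tlim v) = v)
    -- the functional calculi on `C₀(ℝ, ℂ)`
    (Φ : A → C₀(ℝ, ℂ) →⋆ₙₐ[ℂ] (H →L[ℂ] H)) (Φlim : C₀(ℝ, ℂ) →⋆ₙₐ[ℂ] (H →L[ℂ] H))
    (r : C₀(ℝ, ℂ)) (hr : ∀ x : ℝ, r x = (Complex.I - (x : ℂ))⁻¹)
    (hΦ : ∀ α, Φ α r = R α) (hΦlim : Φlim r = Rlim)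
    -- a common resolvent point `λ` with strong convergence of the resolvents
    (lam : ℂ) (S : A → H →L[ℂ] H) (Slim : H →L[ℂ] H)
    (hS : ∀ α (u : H), ∃ h : S α u ∈ (T α).domain,
      lam • S α u - T α ⟨S α u, h⟩ = u)
    (hSlim' : ∀ v : Tlim.domain, Slim (lam • (v : H) - Tlim v) = v)
    (hconv : ∀ ξ : H, Tendsto (fun α => S α ξ) atTop (nhds (Slim ξ))) :
    ∀ (φ : C₀(ℝ, ℂ)) (ξ : H), Tendsto (fun α => Φ α φ ξ) atTop (nhds (Φlim φ ξ)) := by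
  have hRbound : ∀ α, ‖R α‖ ≤ ‖r‖ := fun α => hΦ α ▸ NonUnitalStarAlgHom.norm_apply_le (Φ α) r
  have hRconv : ∀ ξ, Tendsto (fun α => R α ξ) atTop (𝓝 (Rlim ξ)) :=
    LinearPMap.tendsto_resolvent_of_tendsto_resolvent hS hSlim' hconv hR' hRlim hRbound
  have hRadjconv : ∀ ξ, Tendsto (fun α => ContinuousLinearMap.adjoint (R α) ξ) atTop
      (𝓝 (ContinuousLinearMap.adjoint Rlim ξ)) :=
    LinearPMap.tendsto_resolvent_of_tendsto_resolvent hS hSlim' hconv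
      (fun α => LinearPMap.IsRightResolvent.adjoint_isLeftResolvent (hsa α) (hR α))
      (LinearPMap.IsLeftResolvent.adjoint_isRightResolvent hsalim hRlim')
      (fun α => (ContinuousLinearMap.adjoint.norm_map (R α)).trans_le (hRbound α))
  have hr' : resolventPullback (.id _) = r := ZeroAtInftyContinuousMap.ext fun x => (hr x).symm
  intro φ ξ
  obtain ⟨g, rfl⟩ := resolventPullback_surjective φ
  exact ContinuousMapZero.tendsto_apply_of_tendsto_id
    (Ψ := fun α => (Φ α).comp resolventPullback)
    (Ψlim := Φlim.comp resolventPullback) (by simpa [hr', hΦ, hΦlim] using hRconv)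
    (by simpa [map_star, hr', hΦ, hΦlim, ContinuousLinearMap.star_eq_adjoint] using hRadjconv) g ξ

/-- Strong resolvent convergence implies strong convergence of the `C₀`-functional calculus
for (possibly unbounded) self-adjoint operators `T_α, T∞` on a Hilbert space `H`.

The operators are encoded as self-adjoint `LinearPMap`s; `R α` (resp. `Rlim`) is the
resolvent `(i − T_α)⁻¹` (characterized algebraically), and `Φ α` (resp. `Φlim`) is the
functional calculus of `T_α` on `C₀(ℝ, ℂ)`, pinned down as the non-unital star algebra
homomorphism sending the resolvent function `x ↦ (i − x)⁻¹` to the resolvent operator.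
If for some `λ` in all the resolvent sets the resolvents `S α = (λ − T_α)⁻¹` converge in the
strong operator topology to `Slim = (λ − T∞)⁻¹`, then `Φ α φ → Φlim φ` strongly for every
`φ ∈ C₀(ℝ, ℂ)`. -/
theorem stmt_9 {H : Type*} [NormedAddCommGroup H] [InnerProductSpace ℂ H] [CompleteSpace H]
    {A : Type*} [Preorder A] [IsDirected A (· ≤ ·)] [Nonempty A]
    (T : A → H →ₗ.[ℂ] H) (Tlim : H →ₗ.[ℂ] H)
    (hsa : ∀ α, IsSelfAdjoint (T α)) (hsalim : IsSelfAdjoint Tlim)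
    -- the resolvents at `i`
    (R : A → H →L[ℂ] H) (Rlim : H →L[ℂ] H)
    (hR : ∀ α (u : H), ∃ h : R α u ∈ (T α).domain,
      Complex.I • R α u - T α ⟨R α u, h⟩ = u)
    (hR' : ∀ α (v : (T α).domain), R α (Complex.I • (v : H) - T α v) = v)
    (hRlim : ∀ u : H, ∃ h : Rlim u ∈ Tlim.domain,
      Complex.I • Rlim u - Tlim ⟨Rlim u, h⟩ = u)
    (hRlim' : ∀ v : Tlim.domain, Rlim (Complex.I • (v : H) - Tlim v) = v)
    -- the functional calculi on `C₀(ℝ, ℂ)`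
    (Φ : A → C₀(ℝ, ℂ) →⋆ₙₐ[ℂ] (H →L[ℂ] H)) (Φlim : C₀(ℝ, ℂ) →⋆ₙₐ[ℂ] (H →L[ℂ] H))
    (r : C₀(ℝ, ℂ)) (hr : ∀ x : ℝ, r x = (Complex.I - (x : ℂ))⁻¹)
    (hΦ : ∀ α, Φ α r = R α) (hΦlim : Φlim r = Rlim)
    -- a common resolvent point `λ` with strong convergence of the resolvents
    (lam : ℂ) (S : A → H →L[ℂ] H) (Slim : H →L[ℂ] H)
    (hS : ∀ α (u : H), ∃ h : S α u ∈ (T α).domain,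
      lam • S α u - T α ⟨S α u, h⟩ = u)
    (hS' : ∀ α (v : (T α).domain), S α (lam • (v : H) - T α v) = v)
    (hSlim : ∀ u : H, ∃ h : Slim u ∈ Tlim.domain,
      lam • Slim u - Tlim ⟨Slim u, h⟩ = u)
    (hSlim' : ∀ v : Tlim.domain, Slim (lam • (v : H) - Tlim v) = v)
    (hconv : ∀ ξ : H, Tendsto (fun α => S α ξ) atTop (nhds (Slim ξ))) :
    ∀ (φ : C₀(ℝ, ℂ)) (ξ : H), Tendsto (fun α => Φ α φ ξ) atTop (nhds (Φlim φ ξ)) :=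
  stmt_9_general T Tlim hsa hsalim R Rlim hR hR' hRlim hRlim' Φ Φlim r hr hΦ hΦlim lam S Slim hS
    hSlim' hconv
end

section
/- Let X be a topological space, (V_x)_{x∈X} a family of topological vector spaces, and p = (p_i(x))_{i∈I, x∈X} families of seminorms generating the topology of each V_x. Let 𝒞 be a continuous subspace of sections (i.e. for every f ∈ 𝒞 and i ∈ I the function x ↦ p_i(x)(f(x)) is continuous). Define 𝒞̄ to be the set of all sections g such that for every i ∈ I, x ∈ X, ε > 0 there exist f ∈ 𝒞 and a neighborhood U of x with p_i(y)(g(y) − f(y)) ≤ ε for all y ∈ U. Then 𝒞̄ is itself a continuous subspace: for every g ∈ 𝒞̄ and i ∈ I, the function x ↦ p_i(x)(g(x)) is continuous. -/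
open Topology

theorem Metric.continuous_of_locally_uniform_approx {α β : Type*} [TopologicalSpace α]
    [PseudoMetricSpace β] {f : α → β}
    (L : ∀ x, ∀ ε > 0, ∃ t ∈ 𝓝 x, ∃ F : α → β, Continuous F ∧ ∀ y ∈ t, dist (f y) (F y) ≤ ε) :
    Continuous f := by
  refine continuous_of_locally_uniform_approx_of_continuousAt fun x u hu => ?_
  obtain ⟨ε, hε, hεu⟩ := Metric.mem_uniformity_dist.1 hu
  obtain ⟨t, ht, F, hF, hFt⟩ := L x (ε / 2) (half_pos hε)
  exact ⟨t, ht, F, hF.continuousAt,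
    fun y hy => hεu ((hFt y hy).trans_lt (half_lt_self hε))⟩

/-- If `𝒞` is a continuous subspace of sections of a field of locally convex spaces (given by
seminorms `p i x`), then every section `g` in its local uniform closure again has continuous
seminorm functions `x ↦ p i x (g x)`. -/
theorem stmt_11 {X I 𝕜 : Type*} [TopologicalSpace X] [NormedField 𝕜]
    {V : X → Type*} [∀ x, AddCommGroup (V x)] [∀ x, Module 𝕜 (V x)]
    (p : I → ∀ x, Seminorm 𝕜 (V x))
    (C : Submodule 𝕜 (∀ x, V x))
    (hcont : ∀ f ∈ C, ∀ i : I, Continuous fun x => p i x (f x))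
    (g : ∀ x, V x)
    (hg : ∀ (i : I) (x : X), ∀ ε > (0 : ℝ), ∃ f ∈ C, ∃ U ∈ nhds x,
      ∀ y ∈ U, p i y (g y - f y) ≤ ε) :
    ∀ i : I, Continuous fun x => p i x (g x) := by
  intro i
  refine Metric.continuous_of_locally_uniform_approx fun x ε hε => ?_
  obtain ⟨f, hf, U, hU, hfg⟩ := hg i x ε hε
  exact ⟨U, hU, _, hcont f hf i,
    fun y hy => (abs_sub_map_le_sub (p i y) (g y) (f y)).trans (hfg y hy)⟩
end

section
/- Let 𝒞 be a continuous, locally uniformly closed subspace of sections of a field of locally convex spaces over X. Then 𝒞 is a module over C(X): for every f ∈ 𝒞 and every continuous function φ : X → 𝕂, the section x ↦ φ(x)·f(x) belongs to 𝒞. -/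
open Filter Topology

theorem tendsto_seminorm_smul_sub_smul_nhds_zero {X 𝕜 : Type*} [TopologicalSpace X]
    [NormedField 𝕜] {V : X → Type*} [∀ x, AddCommGroup (V x)] [∀ x, Module 𝕜 (V x)]
    (q : ∀ x, Seminorm 𝕜 (V x)) {f : ∀ x, V x} {φ : X → 𝕜} {x : X}
    (hf : ContinuousAt (fun y => q y (f y)) x) (hφ : ContinuousAt φ x) :
    Tendsto (fun y => q y (φ y • f y - φ x • f y)) (𝓝 x) (𝓝 0) := by
  have hlim : Tendsto (fun y => ‖φ y - φ x‖ * q y (f y)) (𝓝 x)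
      (𝓝 (‖φ x - φ x‖ * q x (f x))) :=
    (hφ.sub continuousAt_const).norm.mul hf
  simpa only [← sub_smul, map_smul_eq_mul, sub_self, norm_zero, zero_mul] using hlim

/-- A continuous, locally uniformly closed subspace of sections of a field of locally convex
spaces is a module over `C(X)`: multiplying a section in `𝒞` by a continuous scalar function
gives again a section in `𝒞`. -/
theorem stmt_13 {X I 𝕜 : Type*} [TopologicalSpace X] [NormedField 𝕜]
    {V : X → Type*} [∀ x, AddCommGroup (V x)] [∀ x, Module 𝕜 (V x)]
    (p : I → ∀ x, Seminorm 𝕜 (V x))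
    (C : Submodule 𝕜 (∀ x, V x))
    (hcont : ∀ f ∈ C, ∀ i : I, Continuous fun x => p i x (f x))
    (hluc : ∀ g : ∀ x, V x,
      (∀ (i : I) (x : X), ∀ ε > (0 : ℝ), ∃ f ∈ C, ∃ U ∈ nhds x,
        ∀ y ∈ U, p i y (g y - f y) ≤ ε) → g ∈ C) :
    ∀ f ∈ C, ∀ φ : X → 𝕜, Continuous φ → (fun x => φ x • f x) ∈ C := by
  intro f hf φ hφ
  refine hluc _ fun i x ε hε => ⟨φ x • f, C.smul_mem _ hf, ?_⟩
  have hnear : ∀ᶠ y in 𝓝 x, p i y (φ y • f y - φ x • f y) ≤ ε :=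
    (tendsto_seminorm_smul_sub_smul_nhds_zero (p i) (hcont f hf i).continuousAt
      hφ.continuousAt).eventually (ge_mem_nhds hε)
  exact ⟨_, hnear, fun y hy => hy⟩
end

section
/- Let (b_α)_{α∈A} and b∞ be bounded nonnegative symmetric bilinear forms on a Hilbert space H₀, with associated bounded self-adjoint operators B_α, B∞ (i.e. b_α[u,v] = ⟨B_α u, v⟩). Then B_α → B∞ in the strong operator topology if and only if the forms b_α converge to b∞ in the Mosco sense: (M1) for every net u_α → u∞ weakly, b∞[u∞] + ‖u∞‖² ≤ liminf_α (b_α[u_α] + ‖u_α‖²); (M2) for every η ∈ H₀ there exist η_α → η in norm with b_α[η_α] → b∞[η]. -/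
/-!
Strong convergence gives (M1) by expanding `b_α[u_α]` around the weak limit `u`: the cross term
`⟨B_α u, u_α - u⟩` tends to zero up to an error `‖(B_α - B∞) u‖ ‖u_α - u‖`, which the term
`‖u_α - u‖²` coming from the norm absorbs; this is why the norm is added to the form, since a
weakly convergent net need not be bounded. (M2) holds with the constant recovery net.

Conversely, (M2) and the uniform bound give `b_α[w] → b∞[w]` for every `w`, so by polarization
`B_α ξ → B∞ ξ` weakly. With `w_α = B_α ξ - B∞ ξ` and `s = 1 / (sup ‖B_α‖ + 1)`, the net
`u_α = ξ - s w_α` tends weakly to `ξ` and satisfies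
`b_α[u_α] + ‖u_α‖² + s ‖w_α‖² ≤ b∞[ξ] + ‖ξ‖² + o(1)`, so (M1) forces `‖w_α‖ → 0`.
-/

open Filter ENNReal RCLike

open scoped InnerProductSpace Topology

section

variable {𝕜 H ι : Type*} [RCLike 𝕜] [NormedAddCommGroup H] [InnerProductSpace 𝕜 H]
  {l : Filter ι}

lemma re_inner_map_add_self {T : H →L[𝕜] H} (hT : (T : H →ₗ[𝕜] H).IsSymmetric) (x y : H) :
    re ⟪T (x + y), x + y⟫_𝕜 = re ⟪T x, x⟫_𝕜 + 2 * re ⟪T x, y⟫_𝕜 + re ⟪T y, y⟫_𝕜 := by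
  have hsymm : re ⟪T y, x⟫_𝕜 = re ⟪T x, y⟫_𝕜 := by
    rw [← inner_conj_symm, conj_re]
    exact congrArg re (hT x y).symm
  simp only [map_add, inner_add_left, inner_add_right, hsymm]
  ring

lemma re_inner_map_sub_self {T : H →L[𝕜] H} (hT : (T : H →ₗ[𝕜] H).IsSymmetric) (x y : H) :
    re ⟪T (x - y), x - y⟫_𝕜 = re ⟪T x, x⟫_𝕜 - 2 * re ⟪T x, y⟫_𝕜 + re ⟪T y, y⟫_𝕜 := by
  simp only [sub_eq_add_neg, re_inner_map_add_self hT, map_neg, inner_neg_left, inner_neg_right,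
    neg_neg]
  ring

lemma re_inner_map_self_le (T : H →L[𝕜] H) (u : H) : re ⟪T u, u⟫_𝕜 ≤ ‖T‖ * ‖u‖ ^ 2 :=
  calc re ⟪T u, u⟫_𝕜 ≤ ‖T u‖ * ‖u‖ := re_inner_le_norm _ _
    _ ≤ ‖T‖ * ‖u‖ * ‖u‖ := by gcongr; exact T.le_opNorm u
    _ = ‖T‖ * ‖u‖ ^ 2 := by ring

lemma abs_re_inner_map_self_sub_le (T : H →L[𝕜] H) (u v : H) :
    |re ⟪T v, v⟫_𝕜 - re ⟪T u, u⟫_𝕜| ≤ ‖T‖ * (‖v‖ + ‖u‖) * ‖v - u‖ := by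
  have hsplit : ⟪T v, v⟫_𝕜 - ⟪T u, u⟫_𝕜 = ⟪T (v - u), v⟫_𝕜 + ⟪T u, v - u⟫_𝕜 := by
    rw [map_sub, inner_sub_left, inner_sub_right]; ring
  calc |re ⟪T v, v⟫_𝕜 - re ⟪T u, u⟫_𝕜|
      ≤ ‖⟪T (v - u), v⟫_𝕜 + ⟪T u, v - u⟫_𝕜‖ := by rw [← map_sub, hsplit]; exact abs_re_le_norm _
    _ ≤ ‖T (v - u)‖ * ‖v‖ + ‖T u‖ * ‖v - u‖ :=
        (norm_add_le _ _).trans (add_le_add (norm_inner_le_norm _ _) (norm_inner_le_norm _ _))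
    _ ≤ ‖T‖ * ‖v - u‖ * ‖v‖ + ‖T‖ * ‖u‖ * ‖v - u‖ := by
        gcongr <;> exact T.le_opNorm _
    _ = ‖T‖ * (‖v‖ + ‖u‖) * ‖v - u‖ := by ring

lemma le_re_inner_map_self_add_norm_sq {T : H →L[𝕜] H} (hT : (T : H →ₗ[𝕜] H).IsSymmetric)
    (hpos : ∀ v, 0 ≤ re ⟪T v, v⟫_𝕜) (u x z : H) :
    re ⟪T u, u⟫_𝕜 + ‖u‖ ^ 2 + 2 * re ⟪z + u, x - u⟫_𝕜 - ‖T u - z‖ ^ 2 ≤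
      re ⟪T x, x⟫_𝕜 + ‖x‖ ^ 2 := by
  set y := x - u
  have hx : x = u + y := by simp [y]
  have herr : -(‖T u - z‖ * ‖y‖) ≤ re ⟪T u - z, y⟫_𝕜 :=
    neg_le_of_abs_le ((abs_re_le_norm _).trans (norm_inner_le_norm _ _))
  have hsplit : re ⟪T u, y⟫_𝕜 = re ⟪z, y⟫_𝕜 + re ⟪T u - z, y⟫_𝕜 := by
    rw [inner_sub_left, map_sub]; ring
  rw [hx, re_inner_map_add_self hT, norm_add_sq (𝕜 := 𝕜), hsplit, inner_add_left, map_add]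
  nlinarith [hpos y, sq_nonneg (‖y‖ - ‖T u - z‖)]

lemma re_inner_map_self_add_norm_sq_sub_smul_le {T : H →L[𝕜] H}
    (hT : (T : H →ₗ[𝕜] H).IsSymmetric) {C s : ℝ} (hTC : ‖T‖ ≤ C) (hs₀ : 0 ≤ s)
    (hs : s * (C + 1) ≤ 1) (ξ w : H) :
    re ⟪T (ξ - (s : 𝕜) • w), ξ - (s : 𝕜) • w⟫_𝕜 + ‖ξ - (s : 𝕜) • w‖ ^ 2 + s * ‖w‖ ^ 2 ≤
      re ⟪T ξ, ξ⟫_𝕜 + ‖ξ‖ ^ 2 - 2 * s * re ⟪T ξ - w + ξ, w⟫_𝕜 := by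
  have hTw : re ⟪T w, w⟫_𝕜 ≤ C * ‖w‖ ^ 2 :=
    (re_inner_map_self_le T w).trans (by gcongr)
  rw [re_inner_map_sub_self hT, norm_sub_sq (𝕜 := 𝕜), norm_smul, map_smul]
  simp only [inner_smul_left, inner_smul_right, conj_ofReal, re_ofReal_mul, inner_add_left,
    inner_sub_left, map_add, map_sub, inner_self_eq_norm_sq, norm_ofReal, abs_of_nonneg hs₀]
  nlinarith [mul_le_mul_of_nonneg_left hTw (sq_nonneg s),
    mul_le_mul_of_nonneg_right hs (mul_nonneg hs₀ (sq_nonneg ‖w‖))]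


lemma ofReal_le_liminf_of_tendsto_of_eventually_le [l.NeBot] {f g : ι → ℝ} {L : ℝ}
    (hg : Tendsto g l (𝓝 L)) (hgf : ∀ᶠ i in l, g i ≤ f i) :
    ENNReal.ofReal L ≤ liminf (fun i => ENNReal.ofReal (f i)) l := by
  rw [← ((ENNReal.continuous_ofReal.tendsto L).comp hg).liminf_eq]
  exact liminf_le_liminf (hgf.mono fun i hi => ENNReal.ofReal_le_ofReal hi)

lemma eventually_lt_of_ofReal_le_liminf {f : ι → ℝ} {L c : ℝ} (hf : ∀ i, 0 ≤ f i)
    (h : ENNReal.ofReal L ≤ liminf (fun i => ENNReal.ofReal (f i)) l) (hc : c < L) :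
    ∀ᶠ i in l, c < f i := by
  rcases lt_or_ge c 0 with hc₀ | hc₀
  · exact Eventually.of_forall fun i => hc₀.trans_le (hf i)
  have hlt : ENNReal.ofReal c < liminf (fun i => ENNReal.ofReal (f i)) l :=
    ((ENNReal.ofReal_lt_ofReal_iff (hc₀.trans_lt hc)).mpr hc).trans_le h
  filter_upwards [eventually_lt_of_lt_liminf hlt] with i hi
  exact (ENNReal.ofReal_lt_ofReal_iff'.mp hi).1

lemma tendsto_inner_of_tendsto_re_inner {x : ι → H} {y : H}
    (h : ∀ v, Tendsto (fun i => re ⟪v, x i⟫_𝕜) l (𝓝 (re ⟪v, y⟫_𝕜))) (v : H) :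
    Tendsto (fun i => ⟪v, x i⟫_𝕜) l (𝓝 ⟪v, y⟫_𝕜) := by
  have him : ∀ z : H, im ⟪v, z⟫_𝕜 = re ⟪(I : 𝕜) • v, z⟫_𝕜 := fun z => by
    rw [inner_smul_left, conj_I, neg_mul, map_neg, I_mul_re, neg_neg]
  have hofReal := (RCLike.continuous_ofReal (K := 𝕜)).tendsto
  have hre_im := ((hofReal _).comp (h v)).add
    (((hofReal _).comp (h ((I : 𝕜) • v))).mul_const (I : 𝕜))
  simpa only [Function.comp_def, ← him, re_add_im] using hre_im

lemma tendsto_re_inner_map_self_of_tendsto {T : ι → H →L[𝕜] H} {C : ℝ} (hTC : ∀ i, ‖T i‖ ≤ C)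
    {u : ι → H} {w : H} (hu : Tendsto u l (𝓝 w)) {q : ℝ}
    (hq : Tendsto (fun i => re ⟪T i (u i), u i⟫_𝕜) l (𝓝 q)) :
    Tendsto (fun i => re ⟪T i w, w⟫_𝕜) l (𝓝 q) := by
  have hdiff : Tendsto (fun i => re ⟪T i w, w⟫_𝕜 - re ⟪T i (u i), u i⟫_𝕜) l (𝓝 0) := by
    refine squeeze_zero_norm (fun i => ?_) (a := fun i => C * (‖w‖ + ‖u i‖) * ‖w - u i‖) ?_
    · exact (abs_re_inner_map_self_sub_le (T i) (u i) w).trans (by gcongr; exact hTC i)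
    · simpa using (((tendsto_const_nhds (x := ‖w‖)).add hu.norm).const_mul C).mul
        ((tendsto_const_nhds (x := w)).sub hu).norm
  simpa using hdiff.add hq


lemma tendsto_zero_of_add_le_of_ofReal_le_liminf {f g d : ι → ℝ} {L : ℝ} (hf : ∀ i, 0 ≤ f i)
    (hd : ∀ i, 0 ≤ d i) (hfdg : ∀ i, f i + d i ≤ g i) (hg : Tendsto g l (𝓝 L))
    (hL : ENNReal.ofReal L ≤ liminf (fun i => ENNReal.ofReal (f i)) l) :
    Tendsto d l (𝓝 0) := by
  refine tendsto_order.mpr ⟨fun a ha => Eventually.of_forall fun i => ha.trans_le (hd i),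
    fun c hc => ?_⟩
  filter_upwards [eventually_lt_of_ofReal_le_liminf hf hL (sub_lt_self L (half_pos hc)),
    hg.eventually_lt_const (lt_add_of_pos_right L (half_pos hc))] with i hfi hgi
  linarith [hfdg i]

lemma tendsto_inner_apply_of_tendsto_re_inner_map_self {T : ι → H →L[𝕜] H} {S : H →L[𝕜] H}
    (hT : ∀ i, (T i : H →ₗ[𝕜] H).IsSymmetric) (hS : (S : H →ₗ[𝕜] H).IsSymmetric)
    (h : ∀ w, Tendsto (fun i => re ⟪T i w, w⟫_𝕜) l (𝓝 (re ⟪S w, w⟫_𝕜))) (ξ v : H) :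
    Tendsto (fun i => ⟪v, T i ξ⟫_𝕜) l (𝓝 ⟪v, S ξ⟫_𝕜) := by
  have hpolar : ∀ {R : H →L[𝕜] H}, (R : H →ₗ[𝕜] H).IsSymmetric → ∀ v,
      re ⟪v, R ξ⟫_𝕜 = (re ⟪R (ξ + v), ξ + v⟫_𝕜 - re ⟪R (ξ - v), ξ - v⟫_𝕜) / 4 := by
    intro R hR v
    rw [re_inner_map_add_self hR, re_inner_map_sub_self hR, ← inner_conj_symm, conj_re]
    ring
  refine tendsto_inner_of_tendsto_re_inner (fun v => ?_) v
  simp only [hpolar (hT _), hpolar hS]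
  exact ((h _).sub (h _)).div_const 4

lemma ofReal_le_liminf_of_tendsto_apply [l.NeBot] {T : ι → H →L[𝕜] H} {S : H →L[𝕜] H}
    (hT : ∀ i, (T i : H →ₗ[𝕜] H).IsSymmetric) (hpos : ∀ i v, 0 ≤ re ⟪T i v, v⟫_𝕜)
    (hTS : ∀ v, Tendsto (fun i => T i v) l (𝓝 (S v))) {u : ι → H} {x : H}
    (hu : ∀ v, Tendsto (fun i => ⟪v, u i⟫_𝕜) l (𝓝 ⟪v, x⟫_𝕜)) :
    ENNReal.ofReal (re ⟪S x, x⟫_𝕜 + ‖x‖ ^ 2) ≤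
      liminf (fun i => ENNReal.ofReal (re ⟪T i (u i), u i⟫_𝕜 + ‖u i‖ ^ 2)) l := by
  refine ofReal_le_liminf_of_tendsto_of_eventually_le ?_ (Eventually.of_forall fun i =>
    le_re_inner_map_self_add_norm_sq (hT i) (hpos i) x (u i) (S x))
  have hform : Tendsto (fun i => re ⟪T i x, x⟫_𝕜) l (𝓝 (re ⟪S x, x⟫_𝕜)) :=
    (continuous_re.tendsto _).comp ((hTS x).inner tendsto_const_nhds)
  have hweak : Tendsto (fun i => re ⟪S x + x, u i - x⟫_𝕜) l (𝓝 0) := by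
    simpa [inner_sub_right, Function.comp_def] using
      (continuous_re.tendsto _).comp ((hu (S x + x)).sub_const ⟪S x + x, x⟫_𝕜)
  have hstrong : Tendsto (fun i => ‖T i x - S x‖ ^ 2) l (𝓝 0) := by
    simpa using (tendsto_iff_norm_sub_tendsto_zero.mp (hTS x)).pow 2
  simpa using ((hform.add_const (‖x‖ ^ 2)).add (hweak.const_mul 2)).sub hstrong

lemma tendsto_apply_of_mosco {T : ι → H →L[𝕜] H} {S : H →L[𝕜] H}
    (hT : ∀ i, (T i : H →ₗ[𝕜] H).IsSymmetric) (hS : (S : H →ₗ[𝕜] H).IsSymmetric)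
    (hpos : ∀ i v, 0 ≤ re ⟪T i v, v⟫_𝕜) {C : ℝ} (hTC : ∀ i, ‖T i‖ ≤ C)
    (hM₁ : ∀ (u : ι → H) (x : H), (∀ v, Tendsto (fun i => ⟪v, u i⟫_𝕜) l (𝓝 ⟪v, x⟫_𝕜)) →
      ENNReal.ofReal (re ⟪S x, x⟫_𝕜 + ‖x‖ ^ 2) ≤
        liminf (fun i => ENNReal.ofReal (re ⟪T i (u i), u i⟫_𝕜 + ‖u i‖ ^ 2)) l)
    (hM₂ : ∀ η, ∃ u : ι → H, Tendsto u l (𝓝 η) ∧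
      Tendsto (fun i => re ⟪T i (u i), u i⟫_𝕜) l (𝓝 (re ⟪S η, η⟫_𝕜))) (ξ : H) :
    Tendsto (fun i => T i ξ) l (𝓝 (S ξ)) := by
  have hform : ∀ w, Tendsto (fun i => re ⟪T i w, w⟫_𝕜) l (𝓝 (re ⟪S w, w⟫_𝕜)) := fun w =>
    let ⟨_, hu, hq⟩ := hM₂ w
    tendsto_re_inner_map_self_of_tendsto hTC hu hq
  set s : ℝ := (max C 0 + 1)⁻¹
  have hs₀ : 0 < s := by positivity
  have hs : s * (max C 0 + 1) ≤ 1 := (inv_mul_cancel₀ (by positivity)).le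
  set w : ι → H := fun i => T i ξ - S ξ
  have hw : ∀ v, Tendsto (fun i => ⟪v, w i⟫_𝕜) l (𝓝 0) := fun v => by
    simpa [w, inner_sub_right] using
      (tendsto_inner_apply_of_tendsto_re_inner_map_self hT hS hform ξ v).sub_const ⟪v, S ξ⟫_𝕜
  have hu : ∀ v, Tendsto (fun i => ⟪v, ξ - (s : 𝕜) • w i⟫_𝕜) l (𝓝 ⟪v, ξ⟫_𝕜) := fun v => by
    simpa [inner_sub_right, inner_smul_right] using ((hw v).const_mul (s : 𝕜)).const_sub ⟪v, ξ⟫_𝕜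
  have hupper : Tendsto (fun i => re ⟪T i ξ, ξ⟫_𝕜 + ‖ξ‖ ^ 2 - 2 * s * re ⟪T i ξ - w i + ξ, w i⟫_𝕜)
      l (𝓝 (re ⟪S ξ, ξ⟫_𝕜 + ‖ξ‖ ^ 2)) := by
    simpa [w] using ((hform ξ).add_const _).sub
      (((continuous_re.tendsto _).comp (hw (S ξ + ξ))).const_mul (2 * s))
  have hsq : Tendsto (fun i => s * ‖w i‖ ^ 2) l (𝓝 0) :=
    tendsto_zero_of_add_le_of_ofReal_le_liminf (fun i => add_nonneg (hpos i _) (sq_nonneg _))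
      (fun i => by positivity)
      (fun i => re_inner_map_self_add_norm_sq_sub_smul_le (hT i)
        ((hTC i).trans (le_max_left C 0)) hs₀.le hs ξ (w i))
      hupper (hM₁ _ ξ hu)
  rw [tendsto_iff_norm_sub_tendsto_zero]
  simpa [hs₀.ne'] using (hsq.const_mul s⁻¹).sqrt

end

theorem stmt_18_general {𝕜 H : Type*} [RCLike 𝕜] [NormedAddCommGroup H] [InnerProductSpace 𝕜 H]
    [CompleteSpace H]
    {A : Type*} [Preorder A] [IsDirected A (· ≤ ·)] [Nonempty A]
    (B : A → H →L[𝕜] H) (Blim : H →L[𝕜] H)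
    (hsa : ∀ α, IsSelfAdjoint (B α)) (hsalim : IsSelfAdjoint Blim)
    (hpos : ∀ α (u : H), 0 ≤ re (inner 𝕜 (B α u) u : 𝕜))
    (Cb : ℝ) (hb : ∀ α, ‖B α‖ ≤ Cb) :
    (∀ ξ : H, Tendsto (fun α => B α ξ) atTop (nhds (Blim ξ))) ↔
      ((∀ (u : A → H) (ulim : H),
          (∀ v : H, Tendsto (fun α => (inner 𝕜 v (u α) : 𝕜)) atTop (nhds (inner 𝕜 v ulim))) →
          ENNReal.ofReal (re (inner 𝕜 (Blim ulim) ulim : 𝕜) + ‖ulim‖ ^ 2) ≤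
            Filter.liminf
              (fun α => ENNReal.ofReal (re (inner 𝕜 (B α (u α)) (u α) : 𝕜) + ‖u α‖ ^ 2))
              atTop) ∧
        (∀ η : H, ∃ u : A → H, Tendsto u atTop (nhds η) ∧
          Tendsto (fun α => re (inner 𝕜 (B α (u α)) (u α) : 𝕜)) atTop
            (nhds (re (inner 𝕜 (Blim η) η : 𝕜))))) := by
  have hsym : ∀ α, (B α : H →ₗ[𝕜] H).IsSymmetric := fun α => (hsa α).isSymmetric
  refine ⟨fun hS => ⟨fun u ulim hu => ofReal_le_liminf_of_tendsto_apply hsym hpos hS hu,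
    fun η => ⟨fun _ => η, tendsto_const_nhds, ?_⟩⟩,
    fun ⟨hM₁, hM₂⟩ => tendsto_apply_of_mosco hsym hsalim.isSymmetric hpos hb hM₁ hM₂⟩
  exact (continuous_re.tendsto _).comp ((hS η).inner tendsto_const_nhds)

/-- For a uniformly bounded net of nonnegative bounded self-adjoint operators `B_α` with
associated forms `b_α[u] = ⟨B_α u, u⟩`, strong operator convergence `B_α → B∞` is equivalent
to Mosco convergence of the forms: (M1) weak lower semicontinuity of `b[u] + ‖u‖²` along
weakly convergent nets, and (M2) existence of strongly convergent recovery nets with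
convergence of form values. -/
theorem stmt_18 {𝕜 H : Type*} [RCLike 𝕜] [NormedAddCommGroup H] [InnerProductSpace 𝕜 H]
    [CompleteSpace H]
    {A : Type*} [Preorder A] [IsDirected A (· ≤ ·)] [Nonempty A]
    (B : A → H →L[𝕜] H) (Blim : H →L[𝕜] H)
    (hsa : ∀ α, IsSelfAdjoint (B α)) (hsalim : IsSelfAdjoint Blim)
    (hpos : ∀ α (u : H), 0 ≤ re (inner 𝕜 (B α u) u : 𝕜))
    (hposlim : ∀ u : H, 0 ≤ re (inner 𝕜 (Blim u) u : 𝕜))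
    (Cb : ℝ) (hb : ∀ α, ‖B α‖ ≤ Cb) :
    (∀ ξ : H, Tendsto (fun α => B α ξ) atTop (nhds (Blim ξ))) ↔
      ((∀ (u : A → H) (ulim : H),
          (∀ v : H, Tendsto (fun α => (inner 𝕜 v (u α) : 𝕜)) atTop (nhds (inner 𝕜 v ulim))) →
          ENNReal.ofReal (re (inner 𝕜 (Blim ulim) ulim : 𝕜) + ‖ulim‖ ^ 2) ≤
            Filter.liminf
              (fun α => ENNReal.ofReal (re (inner 𝕜 (B α (u α)) (u α) : 𝕜) + ‖u α‖ ^ 2))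
              atTop) ∧
        (∀ η : H, ∃ u : A → H, Tendsto u atTop (nhds η) ∧
          Tendsto (fun α => re (inner 𝕜 (B α (u α)) (u α) : 𝕜)) atTop
            (nhds (re (inner 𝕜 (Blim η) η : 𝕜))))) :=
  stmt_18_general B Blim hsa hsalim hpos Cb hb
end
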